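/- arXiv:2311.13875 — 2 statements merged into one kernel-verified Lean document; each statement's English description precedes it below -/
import Mathlib

section
/- Fix c > 0, κ̄ ≥ 0, K ∈ ℕ, ξ > 0, and a Hermitian positive semidefinite matrix R ∈ ℂ^{M×M} with R ≠ 0. Then the map f(δ) = tr(R ((1/(1+δ))((κ̄+1)K + κ̄) R + ξ I_M)^{-1}) is continuous and nondecreasing on [0, ∞), bounded above by tr(R)/ξ, and the fixed-point equation δ = f(δ) has a unique nonnegative solution. -/
/-!
Diagonalising `R = U diag(λ) Uᴴ` turns `f` into `δ ↦ ∑ λᵢ / (c λᵢ / (1 + δ) + ξ)` with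
`c = (κ̄ + 1) K + κ̄`, a sum of continuous, nondecreasing terms bounded by `λᵢ / ξ`. A fixed point
exists by the intermediate value theorem applied to `δ - f δ` on `[0, tr R / ξ]`. It is unique
because at a fixed point `δ / (1 + δ) = f δ / (1 + δ) = ∑ λᵢ / (c λᵢ + (1 + δ) ξ)`: the left side
is strictly increasing in `δ`, the right side strictly decreasing as soon as some `λᵢ > 0`, i.e.
`R ≠ 0`.
-/

open Matrix Set
open scoped ComplexOrder

theorem exists_eq_self_of_continuousOn_Ici {f : ℝ → ℝ} {a B : ℝ} (hf : ContinuousOn f (Ici a))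
    (ha : a ≤ f a) (hB : ∀ x ∈ Ici a, f x ≤ B) : ∃ x, a ≤ x ∧ x = f x := by
  have haB : a ≤ B := ha.trans (hB a self_mem_Ici)
  have hcont : ContinuousOn (fun x => x - f x) (Icc a B) :=
    continuousOn_id.sub (hf.mono Icc_subset_Ici_self)
  have hzero : (0 : ℝ) ∈ Icc (a - f a) (B - f B) :=
    ⟨by linarith, by linarith [hB B haB]⟩
  obtain ⟨x, hx, hfx⟩ := intermediate_value_Icc haB hcont hzero
  exact ⟨x, hx.1, by linarith [show x - f x = 0 from hfx]⟩

theorem strictMonoOn_div_one_add : StrictMonoOn (fun x : ℝ => x / (1 + x)) (Ici 0) := by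
  intro x hx y hy hxy
  simp only [mem_Ici] at hx hy
  rw [div_lt_div_iff₀ (by linarith) (by linarith)]
  linarith

theorem eq_of_eq_self_of_strictAntiOn_div {f : ℝ → ℝ}
    (hf : StrictAntiOn (fun x => f x / (1 + x)) (Ici 0)) {x y : ℝ} (hx : 0 ≤ x) (hy : 0 ≤ y)
    (hfx : x = f x) (hfy : y = f y) : x = y := by
  have hg : StrictMonoOn (fun x => x / (1 + x) - f x / (1 + x)) (Ici 0) := fun a ha b hb hab => by
    linarith [hf ha hb hab, strictMonoOn_div_one_add ha hb hab]
  refine hg.injOn hx hy ?_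
  simp only [← hfx, ← hfy, sub_self]

section ResolventTrace

variable {c ξ : ℝ}

theorem resolventTrace_denom_pos (hc : 0 ≤ c) (hξ : 0 < ξ) {w δ : ℝ} (hw : 0 ≤ w) (hδ : 0 ≤ δ) :
    0 < c / (1 + δ) * w + ξ := by
  positivity

variable {ι : Type*} [Fintype ι] {w : ι → ℝ}

noncomputable def resolventTrace (c ξ : ℝ) (w : ι → ℝ) (δ : ℝ) : ℝ :=
  ∑ i, w i / (c / (1 + δ) * w i + ξ)

theorem continuousOn_resolventTrace (hc : 0 ≤ c) (hξ : 0 < ξ) (hw : ∀ i, 0 ≤ w i) :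
    ContinuousOn (resolventTrace c ξ w) (Ici 0) := by
  refine continuousOn_finsetSum _ fun i _ => continuousOn_const.div ?_ fun δ hδ =>
    (resolventTrace_denom_pos hc hξ (hw i) hδ).ne'
  fun_prop (disch := exact fun δ (hδ : 0 ≤ δ) => by positivity)

theorem monotoneOn_resolventTrace (hc : 0 ≤ c) (hξ : 0 < ξ) (hw : ∀ i, 0 ≤ w i) :
    MonotoneOn (resolventTrace c ξ w) (Ici 0) := by
  intro a (ha : 0 ≤ a) b (hb : 0 ≤ b) hab
  refine Finset.sum_le_sum fun i _ => ?_
  have := hw i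
  gcongr

theorem resolventTrace_le (hc : 0 ≤ c) (hξ : 0 < ξ) (hw : ∀ i, 0 ≤ w i) {δ : ℝ} (hδ : 0 ≤ δ) :
    resolventTrace c ξ w δ ≤ (∑ i, w i) / ξ := by
  rw [Finset.sum_div]
  refine Finset.sum_le_sum fun i _ => ?_
  have := hw i
  gcongr
  exact le_add_of_nonneg_left (by positivity)

theorem resolventTrace_nonneg (hc : 0 ≤ c) (hξ : 0 < ξ) (hw : ∀ i, 0 ≤ w i) {δ : ℝ} (hδ : 0 ≤ δ) :
    0 ≤ resolventTrace c ξ w δ :=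
  Finset.sum_nonneg fun i _ => div_nonneg (hw i) (resolventTrace_denom_pos hc hξ (hw i) hδ).le

theorem resolventTrace_div_one_add (hc : 0 ≤ c) (hξ : 0 < ξ) (hw : ∀ i, 0 ≤ w i) {δ : ℝ}
    (hδ : 0 ≤ δ) :
    resolventTrace c ξ w δ / (1 + δ) = ∑ i, w i / (c * w i + (1 + δ) * ξ) := by
  rw [resolventTrace, Finset.sum_div]
  refine Finset.sum_congr rfl fun i _ => ?_
  have := resolventTrace_denom_pos hc hξ (hw i) hδ
  field_simp

theorem strictAntiOn_resolventTrace_div_one_add (hc : 0 ≤ c) (hξ : 0 < ξ) (hw : ∀ i, 0 ≤ w i)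
    {j : ι} (hj : 0 < w j) :
    StrictAntiOn (fun δ => resolventTrace c ξ w δ / (1 + δ)) (Ici 0) := by
  intro a (ha : 0 ≤ a) b (hb : 0 ≤ b) hab
  simp only [resolventTrace_div_one_add hc hξ hw ha, resolventTrace_div_one_add hc hξ hw hb]
  refine Finset.sum_lt_sum (fun i _ => ?_) ⟨j, Finset.mem_univ j, ?_⟩
  · have := hw i
    gcongr
  · gcongr

end ResolventTrace

namespace Matrix

variable {n 𝕜 : Type*} [Fintype n] [DecidableEq n] [RCLike 𝕜]

theorem trace_conjStarAlgAut (U : unitary (Matrix n n 𝕜)) (A : Matrix n n 𝕜) :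
    (Unitary.conjStarAlgAut 𝕜 _ U A).trace = A.trace := by
  rw [Unitary.conjStarAlgAut_apply, trace_mul_cycle, Unitary.coe_star_mul_self, one_mul]

theorem conjStarAlgAut_inv (U : unitary (Matrix n n 𝕜)) (A : Matrix n n 𝕜) :
    Unitary.conjStarAlgAut 𝕜 _ U A⁻¹ = (Unitary.conjStarAlgAut 𝕜 _ U A)⁻¹ := by
  have hU : (U : Matrix n n 𝕜)⁻¹ = star (U : Matrix n n 𝕜) :=
    inv_eq_left_inv (Unitary.coe_star_mul_self U)
  have hU' : (star (U : Matrix n n 𝕜))⁻¹ = U := inv_eq_left_inv (Unitary.coe_mul_star_self U)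
  rw [Unitary.conjStarAlgAut_apply, Unitary.conjStarAlgAut_apply, mul_inv_rev, mul_inv_rev, hU,
    hU', Matrix.mul_assoc]

theorem IsHermitian.trace_mul_inv_smul_add_smul_one {A : Matrix n n 𝕜} (hA : A.IsHermitian)
    {a b : ℝ} (h : ∀ i, a * hA.eigenvalues i + b ≠ 0) :
    (A * ((a : 𝕜) • A + (b : 𝕜) • 1)⁻¹).trace
      = ((∑ i, hA.eigenvalues i / (a * hA.eigenvalues i + b) : ℝ) : 𝕜) := by
  set φ := Unitary.conjStarAlgAut 𝕜 _ hA.eigenvectorUnitary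
  set D := diagonal (RCLike.ofReal ∘ hA.eigenvalues : n → 𝕜)
  set d : n → 𝕜 := fun i => ((a * hA.eigenvalues i + b : ℝ) : 𝕜)
  have hspec : A = φ D := hA.spectral_theorem
  have hsum : (a : 𝕜) • A + (b : 𝕜) • 1 = φ (diagonal d) := by
    rw [hspec, ← map_one φ, ← map_smul, ← map_smul, ← map_add]
    congr 1
    ext i j
    by_cases hij : i = j
    · subst hij; simp [D, d, Algebra.algebraMap_eq_smul_one, add_smul, mul_smul]
    · simp [D, d, hij]
  have hinv : (diagonal d)⁻¹ = diagonal d⁻¹ := by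
    refine inv_eq_right_inv ?_
    rw [diagonal_mul_diagonal, ← diagonal_one]
    congr 1
    funext i
    exact mul_inv_cancel₀ (RCLike.ofReal_ne_zero.mpr (h i))
  have hprod : A * φ (diagonal d⁻¹) = φ (D * diagonal d⁻¹) := by rw [map_mul, ← hspec]
  rw [hsum, ← conjStarAlgAut_inv, hinv, hprod, trace_conjStarAlgAut, diagonal_mul_diagonal,
    trace_diagonal]
  simp [d, div_eq_mul_inv]

end Matrix

/-- The fixed-point map of the deterministic equivalent of the minimum SINR:
for `κ̄ ≥ 0`, `K ∈ ℕ`, `ξ > 0` and `R` Hermitian PSD nonzero,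
`f(δ) = tr(R((1/(1+δ))((κ̄+1)K + κ̄)R + ξI)⁻¹)` is continuous and nondecreasing on
`[0, ∞)`, bounded above by `tr(R)/ξ`, and `δ = f(δ)` has a unique nonnegative
solution. -/
theorem de_fixed_point_unique (M : ℕ) (κ : ℝ) (hκ : 0 ≤ κ) (K : ℕ) (ξ : ℝ)
    (hξ : 0 < ξ) (R : Matrix (Fin M) (Fin M) ℂ) (hR : R.PosSemidef) (hR0 : R ≠ 0)
    (f : ℝ → ℝ)
    (hf : ∀ δ, f δ = (Matrix.trace (R *
      ((((1 / (1 + δ)) * ((κ + 1) * K + κ) : ℝ) : ℂ) • R +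
        (ξ : ℂ) • (1 : Matrix (Fin M) (Fin M) ℂ))⁻¹)).re) :
    ContinuousOn f (Ici 0) ∧ MonotoneOn f (Ici 0) ∧
      (∀ δ ∈ Ici (0 : ℝ), f δ ≤ (Matrix.trace R).re / ξ) ∧
      ∃! δ : ℝ, 0 ≤ δ ∧ δ = f δ := by
  set c : ℝ := (κ + 1) * K + κ
  have hc : 0 ≤ c := by positivity
  set μ := hR.1.eigenvalues
  have hμ : ∀ i, 0 ≤ μ i := hR.eigenvalues_nonneg
  have hfeq : EqOn f (resolventTrace c ξ μ) (Ici 0) := fun δ (hδ : 0 ≤ δ) => by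
    have hden i : 1 / (1 + δ) * c * μ i + ξ ≠ 0 := by
      rw [one_div_mul_eq_div]; exact (resolventTrace_denom_pos hc hξ (hμ i) hδ).ne'
    rw [hf, ← RCLike.ofReal_eq_complex_ofReal, hR.1.trace_mul_inv_smul_add_smul_one hden,
      RCLike.ofReal_eq_complex_ofReal, Complex.ofReal_re, resolventTrace]
    simp only [one_div_mul_eq_div, μ]
  have htrace : (Matrix.trace R).re = ∑ i, μ i := by simp [hR.1.trace_eq_sum_eigenvalues, μ]
  obtain ⟨j, hj⟩ : ∃ j, 0 < μ j := by
    by_contra! h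
    exact hR0 (hR.1.eigenvalues_eq_zero_iff.mp (funext fun i => le_antisymm (h i) (hμ i)))
  have hcont : ContinuousOn f (Ici 0) := (continuousOn_resolventTrace hc hξ hμ).congr hfeq
  have hle : ∀ δ ∈ Ici (0 : ℝ), f δ ≤ (Matrix.trace R).re / ξ := fun δ hδ => by
    rw [hfeq hδ, htrace]; exact resolventTrace_le hc hξ hμ hδ
  refine ⟨hcont, (monotoneOn_resolventTrace hc hξ hμ).congr hfeq.symm, hle, ?_⟩
  obtain ⟨δ, hδ, hfix⟩ := exists_eq_self_of_continuousOn_Ici hcont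
    ((hfeq self_mem_Ici).trans_ge (resolventTrace_nonneg hc hξ hμ le_rfl)) hle
  have hanti : StrictAntiOn (fun δ => f δ / (1 + δ)) (Ici 0) :=
    (strictAntiOn_resolventTrace_div_one_add hc hξ hμ hj).congr fun δ hδ => by
      simp only [hfeq hδ]
  exact ⟨δ, ⟨hδ, hfix⟩, fun δ' ⟨hδ', hfix'⟩ =>
    eq_of_eq_self_of_strictAntiOn_div hanti hδ' hδ hfix' hfix⟩
end

section
/- Let â ∈ ℝ^K have positive entries, Z ∈ ℝ^{K×K} have nonnegative entries with at least one positive entry per row, and w ∈ ℝ^K have positive entries, P_max > 0. If p* maximizes min_k p_k / (â_k (Zp + 1)_k) over {p : w^T p ≤ P_max, p > 0}, then at the optimum w^T p* = P_max and all ratios p*_k / (â_k (Zp* + 1)_k) are equal. -/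
open Matrix

/-!
Scaling a power vector by `t > 1` multiplies the numerator of every ratio by `t` but its
denominator `â_k ((Zp)_k + 1)` by less than `t`, because of the noise term `1`; so an optimum
leaves no slack in the budget. If some ratio exceeded the minimum `m`, lowering that user's power
until its ratio is exactly `m` would only decrease the interference seen by the others, keep
every ratio at least `m`, and free budget, which scaling then turns into a strict improvement.
-/

theorem ciInf_lt_ciInf_of_forall_lt {ι α : Type*} [Finite ι] [Nonempty ι]
    [ConditionallyCompleteLinearOrder α] {f g : ι → α} (hfg : ∀ i, f i < g i) :
    ⨅ i, f i < ⨅ i, g i := by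
  obtain ⟨i, hi⟩ := exists_eq_ciInf_of_finite (f := g)
  exact hi ▸ (ciInf_le (Finite.bddBelow_range f) i).trans_lt (hfg i)

section MulVec

variable {ι R : Type*} [Fintype ι] [Semiring R] [PartialOrder R] [IsOrderedRing R]
  {Z : Matrix ι ι R}

lemma mulVec_apply_le_mulVec_apply (hZ : ∀ k i, 0 ≤ Z k i) {p q : ι → R} (hpq : p ≤ q)
    (k : ι) : (Z *ᵥ p) k ≤ (Z *ᵥ q) k :=
  dotProduct_le_dotProduct_of_nonneg_left hpq (hZ k)

lemma mulVec_apply_nonneg (hZ : ∀ k i, 0 ≤ Z k i) {p : ι → R} (hp : 0 ≤ p) (k : ι) :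
    0 ≤ (Z *ᵥ p) k := by
  simpa using mulVec_apply_le_mulVec_apply hZ hp k

end MulVec

section PowerControl

variable {ι : Type*} [Fintype ι] (ahat : ι → ℝ) (Z : Matrix ι ι ℝ)

noncomputable def sinrDenom (p : ι → ℝ) (k : ι) : ℝ := ahat k * ((Z *ᵥ p) k + 1)

noncomputable def sinrRatio (p : ι → ℝ) (k : ι) : ℝ := p k / sinrDenom ahat Z p k

variable {ahat Z}

lemma sinrDenom_pos (ha : ∀ k, 0 < ahat k) (hZ : ∀ k i, 0 ≤ Z k i) {p : ι → ℝ} (hp : 0 ≤ p)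
    (k : ι) : 0 < sinrDenom ahat Z p k :=
  mul_pos (ha k) (by linarith [mulVec_apply_nonneg hZ hp k])

lemma sinrDenom_mono (ha : ∀ k, 0 < ahat k) (hZ : ∀ k i, 0 ≤ Z k i) {p q : ι → ℝ}
    (hpq : p ≤ q) (k : ι) : sinrDenom ahat Z p k ≤ sinrDenom ahat Z q k :=
  mul_le_mul_of_nonneg_left (by linarith [mulVec_apply_le_mulVec_apply hZ hpq k]) (ha k).le

lemma sinrRatio_pos (ha : ∀ k, 0 < ahat k) (hZ : ∀ k i, 0 ≤ Z k i) {p : ι → ℝ}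
    (hp : ∀ k, 0 < p k) (k : ι) : 0 < sinrRatio ahat Z p k :=
  div_pos (hp k) (sinrDenom_pos ha hZ (fun i => (hp i).le) k)

lemma sinrRatio_lt_sinrRatio_smul (ha : ∀ k, 0 < ahat k) (hZ : ∀ k i, 0 ≤ Z k i)
    {p : ι → ℝ} (hp : ∀ k, 0 < p k) {t : ℝ} (ht : 1 < t) (k : ι) :
    sinrRatio ahat Z p k < sinrRatio ahat Z (t • p) k := by
  have hx := mulVec_apply_nonneg hZ (fun i => (hp i).le) k
  have hd := sinrDenom_pos ha hZ (fun i => (hp i).le) k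
  unfold sinrRatio sinrDenom at hd ⊢
  rw [mulVec_smul, Pi.smul_apply, Pi.smul_apply, smul_eq_mul, smul_eq_mul,
    div_lt_div_iff₀ hd (mul_pos (ha k) (by nlinarith))]
  nlinarith [mul_pos (mul_pos (hp k) (ha k)) (sub_pos.2 ht)]

lemma exists_lt_iInf_sinrRatio_of_lt [Nonempty ι] (ha : ∀ k, 0 < ahat k)
    (hZ : ∀ k i, 0 ≤ Z k i) {w : ι → ℝ} (hw : ∀ k, 0 < w k) {Pmax : ℝ} {p : ι → ℝ}
    (hp : ∀ k, 0 < p k) (hslack : w ⬝ᵥ p < Pmax) :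
    ∃ q : ι → ℝ, w ⬝ᵥ q ≤ Pmax ∧ (∀ k, 0 < q k) ∧
      ⨅ k, sinrRatio ahat Z p k < ⨅ k, sinrRatio ahat Z q k := by
  have hwp : 0 < w ⬝ᵥ p :=
    Finset.sum_pos (fun i _ => mul_pos (hw i) (hp i)) Finset.univ_nonempty
  have ht : 1 < Pmax / (w ⬝ᵥ p) := (one_lt_div hwp).2 hslack
  refine ⟨(Pmax / (w ⬝ᵥ p)) • p, ?_, fun k => mul_pos (one_pos.trans ht) (hp k),
    ciInf_lt_ciInf_of_forall_lt (sinrRatio_lt_sinrRatio_smul ha hZ hp ht)⟩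
  rw [dotProduct_smul, smul_eq_mul, div_mul_cancel₀ _ hwp.ne']

lemma update_le_of_le_sinrRatio [DecidableEq ι] (ha : ∀ k, 0 < ahat k)
    (hZ : ∀ k i, 0 ≤ Z k i) {p : ι → ℝ} (hp : 0 ≤ p) {m : ℝ} (hm : ∀ i, m ≤ sinrRatio ahat Z p i)
    (j : ι) : Function.update p j (m * sinrDenom ahat Z p j) ≤ p := by
  intro i
  rcases eq_or_ne i j with rfl | hij
  · simpa only [Function.update_self] using (le_div_iff₀ (sinrDenom_pos ha hZ hp i)).1 (hm i)
  · rw [Function.update_of_ne hij]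

lemma le_sinrRatio_update [DecidableEq ι] (ha : ∀ k, 0 < ahat k) (hZ : ∀ k i, 0 ≤ Z k i)
    {p : ι → ℝ} (hp : 0 ≤ p) {m : ℝ} (hm0 : 0 ≤ m) (hm : ∀ i, m ≤ sinrRatio ahat Z p i)
    (j i : ι) : m ≤ sinrRatio ahat Z (Function.update p j (m * sinrDenom ahat Z p j)) i := by
  set q := Function.update p j (m * sinrDenom ahat Z p j)
  have hqp : q ≤ p := update_le_of_le_sinrRatio ha hZ hp hm j
  have hq : 0 ≤ q := by
    intro i
    rcases eq_or_ne i j with rfl | hij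
    · simpa only [q, Function.update_self, Pi.zero_apply] using
        mul_nonneg hm0 (sinrDenom_pos ha hZ hp i).le
    · simpa only [q, Function.update_of_ne hij] using hp i
  have hDq := sinrDenom_pos ha hZ hq i
  have hDle := sinrDenom_mono ha hZ hqp i
  unfold sinrRatio
  rcases eq_or_ne i j with rfl | hij
  · rw [show q i = m * sinrDenom ahat Z p i from Function.update_self .., le_div_iff₀ hDq]
    exact mul_le_mul_of_nonneg_left hDle hm0
  · rw [show q i = p i from Function.update_of_ne hij ..]
    exact (hm i).trans (div_le_div_of_nonneg_left (hp i) hDq hDle)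

lemma exists_dotProduct_lt_of_sinrRatio_ne [DecidableEq ι] (ha : ∀ k, 0 < ahat k)
    (hZ : ∀ k i, 0 ≤ Z k i) {w : ι → ℝ} (hw : ∀ k, 0 < w k) {p : ι → ℝ} (hp : ∀ k, 0 < p k)
    {k l : ι} (hkl : sinrRatio ahat Z p k ≠ sinrRatio ahat Z p l) :
    ∃ q : ι → ℝ, (∀ k, 0 < q k) ∧ w ⬝ᵥ q < w ⬝ᵥ p ∧
      ⨅ k, sinrRatio ahat Z p k ≤ ⨅ k, sinrRatio ahat Z q k := by
  have : Nonempty ι := ⟨k⟩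
  have hp0 : 0 ≤ p := fun i => (hp i).le
  set m := ⨅ i, sinrRatio ahat Z p i
  have hm : ∀ i, m ≤ sinrRatio ahat Z p i := ciInf_le (Finite.bddBelow_range _)
  have hm0 : 0 < m := by
    obtain ⟨i, hi⟩ := exists_eq_ciInf_of_finite (f := sinrRatio ahat Z p)
    exact (sinrRatio_pos ha hZ hp i).trans_eq hi
  obtain ⟨j, hj⟩ : ∃ j, m < sinrRatio ahat Z p j := by
    by_contra! hall
    exact hkl ((hall k).antisymm (hm k) ▸ ((hall l).antisymm (hm l)).symm)
  set q := Function.update p j (m * sinrDenom ahat Z p j)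
  have hDj := sinrDenom_pos ha hZ hp0 j
  have hqj : q j < p j := by
    simpa only [q, Function.update_self] using (lt_div_iff₀ hDj).1 hj
  have hqp : q ≤ p := update_le_of_le_sinrRatio ha hZ hp0 hm j
  refine ⟨q, fun i => ?_, ?_, le_ciInf (le_sinrRatio_update ha hZ hp0 hm0.le hm j)⟩
  · rcases eq_or_ne i j with rfl | hij
    · simpa only [q, Function.update_self] using mul_pos hm0 hDj
    · simpa only [q, Function.update_of_ne hij] using hp i
  · exact Finset.sum_lt_sum (fun i _ => mul_le_mul_of_nonneg_left (hqp i) (hw i).le)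
      ⟨j, Finset.mem_univ j, mul_lt_mul_of_pos_left hqj (hw j)⟩

end PowerControl

theorem max_min_power_control_general (K : ℕ) (hK : 0 < K) (ahat : Fin K → ℝ)
    (ha : ∀ k, 0 < ahat k) (Z : Matrix (Fin K) (Fin K) ℝ) (hZ : ∀ k i, 0 ≤ Z k i)
    (w : Fin K → ℝ) (hw : ∀ k, 0 < w k) (Pmax : ℝ)
    (pstar : Fin K → ℝ)
    (hfeas : w ⬝ᵥ pstar ≤ Pmax ∧ ∀ k, 0 < pstar k)
    (hopt : ∀ p : Fin K → ℝ, w ⬝ᵥ p ≤ Pmax → (∀ k, 0 < p k) →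
      (⨅ k, p k / (ahat k * (Z.mulVec p k + 1)))
        ≤ ⨅ k, pstar k / (ahat k * (Z.mulVec pstar k + 1))) :
    w ⬝ᵥ pstar = Pmax ∧
      ∀ k l : Fin K,
        pstar k / (ahat k * (Z.mulVec pstar k + 1))
          = pstar l / (ahat l * (Z.mulVec pstar l + 1)) := by
  obtain ⟨hle, hpos⟩ := hfeas
  have : Nonempty (Fin K) := ⟨⟨0, hK⟩⟩
  have htight : w ⬝ᵥ pstar = Pmax := by
    by_contra hne
    obtain ⟨q, hqle, hq, hlt⟩ :=
      exists_lt_iInf_sinrRatio_of_lt ha hZ hw hpos (hle.lt_of_ne hne)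
    exact (hopt q hqle hq).not_gt hlt
  refine ⟨htight, fun k l => ?_⟩
  by_contra hkl
  obtain ⟨q, hq, hqw, hqle⟩ := exists_dotProduct_lt_of_sinrRatio_ne ha hZ hw hpos hkl
  obtain ⟨q', hq'le, hq', hlt⟩ := exists_lt_iInf_sinrRatio_of_lt ha hZ hw hq (htight ▸ hqw)
  exact (hopt q' hq'le hq').not_gt (hqle.trans_lt hlt)

/-- Max–min weighted SINR power control: let `â`, `w` have positive entries,
`Z` have nonnegative entries with at least one positive entry per row, `P_max > 0`.
If `p*` maximizes `min_k p_k / (â_k (Zp + 1)_k)` over the feasible set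
`{p : wᵀp ≤ P_max, p > 0}`, then at the optimum the power constraint is tight,
`wᵀp* = P_max`, and all the ratios are equal. -/
theorem max_min_power_control (K : ℕ) (hK : 0 < K) (ahat : Fin K → ℝ)
    (ha : ∀ k, 0 < ahat k) (Z : Matrix (Fin K) (Fin K) ℝ) (hZ : ∀ k i, 0 ≤ Z k i)
    (hZrow : ∀ k, ∃ i, 0 < Z k i) (w : Fin K → ℝ) (hw : ∀ k, 0 < w k)
    (Pmax : ℝ) (hP : 0 < Pmax)
    (pstar : Fin K → ℝ)
    (hfeas : w ⬝ᵥ pstar ≤ Pmax ∧ ∀ k, 0 < pstar k)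
    (hopt : ∀ p : Fin K → ℝ, w ⬝ᵥ p ≤ Pmax → (∀ k, 0 < p k) →
      (⨅ k, p k / (ahat k * (Z.mulVec p k + 1)))
        ≤ ⨅ k, pstar k / (ahat k * (Z.mulVec pstar k + 1))) :
    w ⬝ᵥ pstar = Pmax ∧
      ∀ k l : Fin K,
        pstar k / (ahat k * (Z.mulVec pstar k + 1))
          = pstar l / (ahat l * (Z.mulVec pstar l + 1)) :=
  max_min_power_control_general K hK ahat ha Z hZ w hw Pmax pstar hfeas hopt
end
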